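/- arXiv:2409.14812 — 2 statements merged into one kernel-verified Lean document; each statement's English description precedes it below -/
import Mathlib

section
/- Let R₀ > 0 and suppose additionally that v(r) > 0 for 0 ≤ r < R₀, that v is twice continuously differentiable on [0,R₀), and that v vanishes to order n ∈ [0,∞) at the boundary of its support, i.e. v(r) = (R₀ − r)^n v₁(r) on [0,R₀] for some continuous function v₁ with v₁(r) > 0 for all r ∈ [0,R₀]. For each μ > 0 let m^μ be a zero-energy scattering solution with scattering length 𝔞₀^μ := R₀ − m^μ(R₀). Then there exist constants C > 0 and μ₀ > 0, depending only on v, n and R₀, such that for all 0 < μ ≤ μ₀ one has 0 ≤ 𝔠₀ − 𝔞₀^μ ≤ C μ^{1/(n+2)}, where 𝔠₀ := R₀ is the capacity. -/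
/-!
Write `b = m(R₀) = 𝔠₀ - 𝔞₀^μ`. On `(0, R₀)` the solution is convex, since `μ m'' = v m ≥ 0`;
together with `m(0) = 0` and `m'(R₀) = 1` this gives `0 ≤ m' ≤ 1` on `(0, R₀]`. Hence `m` is
`1`-Lipschitz there, so `m ≥ b/2` on `[R₀ - b/2, R₀]`, while `v ≥ c (R₀ - r)^n` with
`c = min v₁ > 0` gives `v ≥ c (b/4)^n` on `[R₀ - b/2, R₀ - b/4]`. The mean value theorem for
`m'` on this last interval yields `c (b/4)^n (b/2) (b/4) ≤ μ (m'(R₀ - b/4) - m'(R₀ - b/2)) ≤ μ`,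
i.e. `b ≲ μ^(1/(n+2))`.
-/

open Set

/-- A zero-energy scattering solution `m` for the radial potential `v` supported in `[0, R₀]`
with semiclassical parameter `μ`: it satisfies `μ m'' = v m` on `(0,∞)`, is continuous on
`[0,∞)` and continuously differentiable on `(0,∞)`, with `m(0) = 0`, `m > 0` on `(0,∞)`, and
`m(r) = r - 𝔞₀^μ` for `r ≥ R₀`, where `𝔞₀^μ := R₀ - m(R₀)` is the scattering length. -/
structure ZeroEnergyScattering (v : ℝ → ℝ) (R₀ μ : ℝ) (m : ℝ → ℝ) : Prop where
  cont : ContinuousOn m (Set.Ici 0)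
  diff : ∀ r ∈ Set.Ioi (0 : ℝ), DifferentiableAt ℝ m r
  derivCont : ContinuousOn (deriv m) (Set.Ioi 0)
  diff2 : ∀ r ∈ Set.Ioi (0 : ℝ), DifferentiableAt ℝ (deriv m) r
  ode : ∀ r ∈ Set.Ioi (0 : ℝ), μ * deriv (deriv m) r = v r * m r
  zero : m 0 = 0
  pos : ∀ r ∈ Set.Ioi (0 : ℝ), 0 < m r
  radiation : ∀ r, R₀ ≤ r → m r = r - (R₀ - m R₀)

theorem deriv_eq_one_of_eq_sub_const_of_le {f : ℝ → ℝ} {a c : ℝ} (hf : DifferentiableAt ℝ f a)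
    (h : ∀ x, a ≤ x → f x = x - c) : deriv f a = 1 :=
  (uniqueDiffWithinAt_Ici a).eq_deriv _ hf.hasDerivAt.hasDerivWithinAt
    (((hasDerivWithinAt_id a _).sub_const c).congr h (h a le_rfl))

theorem Real.le_inv_rpow_mul_rpow_of_mul_rpow_le {b c μ p : ℝ} (hb : 0 ≤ b) (hc : 0 < c)
    (hμ : 0 ≤ μ) (hp : 0 < p) (h : c * b ^ p ≤ μ) : b ≤ c⁻¹ ^ p⁻¹ * μ ^ p⁻¹ := by
  rw [← Real.mul_rpow (inv_nonneg.2 hc.le) hμ, Real.le_rpow_inv_iff_of_pos hb (by positivity) hp,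
    inv_mul_eq_div, le_div_iff₀' hc]
  exact h

namespace ZeroEnergyScattering

variable {v : ℝ → ℝ} {R₀ μ : ℝ} {m : ℝ → ℝ}

theorem deriv_eq_one (H : ZeroEnergyScattering v R₀ μ m) (hR₀ : 0 < R₀) : deriv m R₀ = 1 :=
  deriv_eq_one_of_eq_sub_const_of_le (H.diff R₀ hR₀) H.radiation

theorem monotoneOn_deriv (H : ZeroEnergyScattering v R₀ μ m) (hμ : 0 < μ)
    (hv : ∀ r ∈ Ioo 0 R₀, 0 ≤ v r) : MonotoneOn (deriv m) (Ioc 0 R₀) := by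
  refine monotoneOn_of_deriv_nonneg (convex_Ioc 0 R₀) (H.derivCont.mono Ioc_subset_Ioi_self)
    ?_ ?_ <;> rw [interior_Ioc]
  · exact fun r hr => (H.diff2 r hr.1).differentiableWithinAt
  · intro r hr
    rw [← mul_nonneg_iff_of_pos_left hμ, H.ode r hr.1]
    exact mul_nonneg (hv r hr) (H.pos r hr.1).le

theorem deriv_le_one (H : ZeroEnergyScattering v R₀ μ m)
    (hmono : MonotoneOn (deriv m) (Ioc 0 R₀)) {r : ℝ} (hr : r ∈ Ioc 0 R₀) : deriv m r ≤ 1 :=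
  H.deriv_eq_one (hr.1.trans_le hr.2) ▸ hmono hr ⟨hr.1.trans_le hr.2, le_rfl⟩ hr.2

theorem deriv_nonneg (H : ZeroEnergyScattering v R₀ μ m)
    (hmono : MonotoneOn (deriv m) (Ioc 0 R₀)) {r : ℝ} (hr : r ∈ Ioc 0 R₀) : 0 ≤ deriv m r := by
  obtain ⟨ξ, hξ, hξ_slope⟩ := exists_deriv_eq_slope m hr.1 (H.cont.mono Icc_subset_Ici_self)
    fun x hx => (H.diff x hx.1).differentiableWithinAt
  calc 0 ≤ (m r - m 0) / (r - 0) := by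
        rw [H.zero, sub_zero, sub_zero]
        exact div_nonneg (H.pos r hr.1).le hr.1.le
    _ = deriv m ξ := hξ_slope.symm
    _ ≤ deriv m r := hmono ⟨hξ.1, hξ.2.le.trans hr.2⟩ hr hξ.2.le

theorem apply_sub_apply_le_sub (H : ZeroEnergyScattering v R₀ μ m)
    (hmono : MonotoneOn (deriv m) (Ioc 0 R₀)) {x : ℝ} (hx : 0 ≤ x) (hxR : x ≤ R₀) :
    m R₀ - m x ≤ R₀ - x := by
  have := (convex_Icc x R₀).image_sub_le_mul_sub_of_deriv_le
    (H.cont.mono fun r hr => hx.trans hr.1) (C := 1) ?_ ?_ x (left_mem_Icc.2 hxR) R₀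
    (right_mem_Icc.2 hxR) hxR
  · rwa [one_mul] at this
  all_goals rw [interior_Icc]
  · exact fun r hr => (H.diff r (hx.trans_lt hr.1)).differentiableWithinAt
  · exact fun r hr => H.deriv_le_one hmono ⟨hx.trans_lt hr.1, hr.2.le⟩

theorem mul_sub_le_of_le_mul_apply (H : ZeroEnergyScattering v R₀ μ m) (hμ : 0 < μ)
    (hmono : MonotoneOn (deriv m) (Ioc 0 R₀)) {K x y : ℝ} (hx : 0 < x) (hxy : x ≤ y)
    (hyR : y ≤ R₀) (hK : ∀ r ∈ Ioo x y, K ≤ v r * m r) : K * (y - x) ≤ μ := by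
  have hslope := (convex_Icc x y).mul_sub_le_image_sub_of_le_deriv
    (H.derivCont.mono fun r hr => hx.trans_le hr.1) (C := K / μ) ?_ ?_ x (left_mem_Icc.2 hxy) y
    (right_mem_Icc.2 hxy) hxy
  · have hy_le_one := H.deriv_le_one hmono ⟨hx.trans_le hxy, hyR⟩
    have hx_nonneg := H.deriv_nonneg hmono ⟨hx, hxy.trans hyR⟩
    calc K * (y - x) = μ * (K / μ * (y - x)) := by field_simp
      _ ≤ μ * 1 := by gcongr; linarith
      _ = μ := mul_one μ
  all_goals rw [interior_Icc]
  · exact fun r hr => (H.diff2 r (hx.trans hr.1)).differentiableWithinAt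
  · intro r hr
    rw [div_le_iff₀' hμ, H.ode r (hx.trans hr.1)]
    exact hK r hr

theorem two_mul_mul_rpow_le (H : ZeroEnergyScattering v R₀ μ m) (hμ : 0 < μ) (hR₀ : 0 < R₀)
    {c n : ℝ} (hc : 0 < c) (hn : 0 ≤ n) (hv : ∀ r ∈ Ioo 0 R₀, c * (R₀ - r) ^ n ≤ v r) :
    2 * c * (m R₀ / 4) ^ (n + 2) ≤ μ := by
  set b := m R₀
  have hb : 0 < b := H.pos R₀ hR₀
  have hmono := H.monotoneOn_deriv hμ fun r hr =>
    (mul_nonneg hc.le (Real.rpow_nonneg (sub_nonneg.2 hr.2.le) n)).trans (hv r hr)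
  have hbR : b ≤ R₀ := by
    simpa [H.zero] using H.apply_sub_apply_le_sub hmono le_rfl hR₀.le
  have hK : ∀ r ∈ Ioo (R₀ - b / 2) (R₀ - b / 4), c * (b / 4) ^ n * (b / 2) ≤ v r * m r := by
    rintro r ⟨hr_left, hr_right⟩
    have hr : 0 < r := by linarith
    have hm_r : b / 2 ≤ m r := by
      linarith [H.apply_sub_apply_le_sub hmono hr.le (by linarith)]
    have hv_r : c * (b / 4) ^ n ≤ v r :=
      (mul_le_mul_of_nonneg_left (Real.rpow_le_rpow (by positivity) (by linarith) hn) hc.le).trans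
        (hv r ⟨hr, by linarith⟩)
    exact mul_le_mul hv_r hm_r (by positivity) (hv_r.trans' (by positivity))
  have := H.mul_sub_le_of_le_mul_apply hμ hmono (by linarith) (by linarith) (by linarith) hK
  rw [Real.rpow_add (by positivity), Real.rpow_two]
  convert this using 1
  ring

theorem apply_le_mul_rpow (H : ZeroEnergyScattering v R₀ μ m) (hμ : 0 < μ) (hR₀ : 0 < R₀)
    {c n : ℝ} (hc : 0 < c) (hn : 0 ≤ n) (hv : ∀ r ∈ Ioo 0 R₀, c * (R₀ - r) ^ n ≤ v r) :
    m R₀ ≤ 4 * (2 * c)⁻¹ ^ (1 / (n + 2)) * μ ^ (1 / (n + 2)) := by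
  have := Real.le_inv_rpow_mul_rpow_of_mul_rpow_le (div_nonneg (H.pos R₀ hR₀).le zero_le_four)
    (by positivity) hμ.le (by positivity) (H.two_mul_mul_rpow_le hμ hR₀ hc hn hv)
  rw [one_div]
  linarith

end ZeroEnergyScattering

theorem quantitative_scattering_length_general
    (R₀ : ℝ) (hR₀ : 0 < R₀)
    (v : ℝ → ℝ)
    (n : ℝ) (hn : 0 ≤ n)
    (v₁ : ℝ → ℝ) (hv₁_cont : ContinuousOn v₁ (Set.Icc 0 R₀))
    (hv₁_pos : ∀ r ∈ Set.Icc (0 : ℝ) R₀, 0 < v₁ r)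
    (hfact : ∀ r ∈ Set.Icc (0 : ℝ) R₀, v r = (R₀ - r) ^ n * v₁ r)
    (m : ℝ → ℝ → ℝ)
    (hm : ∀ μ, 0 < μ → ZeroEnergyScattering v R₀ μ (m μ)) :
    ∃ C > (0 : ℝ), ∃ μ₀ > (0 : ℝ), ∀ μ, 0 < μ → μ ≤ μ₀ →
      0 ≤ R₀ - (R₀ - m μ R₀) ∧ R₀ - (R₀ - m μ R₀) ≤ C * μ ^ (1 / (n + 2)) := by
  obtain ⟨x₀, hx₀, hmin⟩ := isCompact_Icc.exists_isMinOn (nonempty_Icc.2 hR₀.le) hv₁_cont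
  have hc : 0 < v₁ x₀ := hv₁_pos x₀ hx₀
  have hv : ∀ r ∈ Ioo 0 R₀, v₁ x₀ * (R₀ - r) ^ n ≤ v r := fun r hr => by
    rw [hfact r (Ioo_subset_Icc_self hr), mul_comm]
    exact mul_le_mul_of_nonneg_left (hmin (Ioo_subset_Icc_self hr))
      (Real.rpow_nonneg (sub_nonneg.2 hr.2.le) n)
  refine ⟨4 * (2 * v₁ x₀)⁻¹ ^ (1 / (n + 2)), by positivity, 1, one_pos, fun μ hμ _ => ?_⟩
  rw [sub_sub_cancel]
  exact ⟨((hm μ hμ).pos R₀ hR₀).le, (hm μ hμ).apply_le_mul_rpow hμ hR₀ hc hn hv⟩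

/-- **Quantitative semiclassical convergence of the scattering length to the capacity.**
If `v` is a bounded nonnegative radial potential, strictly positive and `C²` in the interior
of its support `[0,R₀]`, vanishing to order `n` at the boundary, and for each `μ > 0` the
function `m μ` is a zero-energy scattering solution with scattering length
`𝔞₀^μ = R₀ - m μ R₀`, then `0 ≤ 𝔠₀ - 𝔞₀^μ ≤ C μ^(1/(n+2))` for all small `μ`, where
`𝔠₀ = R₀` is the capacity. -/
theorem quantitative_scattering_length
    (R₀ : ℝ) (hR₀ : 0 < R₀)
    (v : ℝ → ℝ) (hv_meas : Measurable v) (hv_nonneg : ∀ r, 0 ≤ v r)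
    (hv_bdd : BddAbove (Set.range v))
    (hv_supp : ∀ r, R₀ ≤ r → v r = 0)
    (hv_pos : ∀ r, 0 ≤ r → r < R₀ → 0 < v r)
    (hv_smooth : ContDiffOn ℝ 2 v (Set.Ico 0 R₀))
    (n : ℝ) (hn : 0 ≤ n)
    (v₁ : ℝ → ℝ) (hv₁_cont : ContinuousOn v₁ (Set.Icc 0 R₀))
    (hv₁_pos : ∀ r ∈ Set.Icc (0 : ℝ) R₀, 0 < v₁ r)
    (hfact : ∀ r ∈ Set.Icc (0 : ℝ) R₀, v r = (R₀ - r) ^ n * v₁ r)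
    (m : ℝ → ℝ → ℝ)
    (hm : ∀ μ, 0 < μ → ZeroEnergyScattering v R₀ μ (m μ)) :
    ∃ C > (0 : ℝ), ∃ μ₀ > (0 : ℝ), ∀ μ, 0 < μ → μ ≤ μ₀ →
      0 ≤ R₀ - (R₀ - m μ R₀) ∧ R₀ - (R₀ - m μ R₀) ≤ C * μ ^ (1 / (n + 2)) :=
  quantitative_scattering_length_general R₀ hR₀ v n hn v₁ hv₁_cont hv₁_pos hfact m hm
end

section
/- There exist a constant C > 0 and a threshold L₀ ≥ R₀, depending only on v and R₀, with the following property. Suppose L ≥ L₀, 0 ≤ E ≤ 3 μ 𝔞₀^μ/(L − R₀)³, and f_L is the Neumann scattering function of a Neumann scattering solution with energy E. Then for all 0 < r ≤ L one has the pointwise gradient bounds |f_L'(r)| ≤ (𝔞₀^μ + C R₀²/L)/r² and |f_L'(r)| ≤ (2 + C R₀/L)/r. -/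
/-!
Write `k = E/μ` and `g(s) = s m₁'(s) - m₁(s)`, so that `f_L' = g/r²` and `g' = s m₁''`. Since
`v ≥ 0`, the equation gives `m₁'' ≥ -k m₁`. If `M` is the largest excess `m₁(s) - s` on `[0, L]`,
then `m₁'' ≥ -k (s + M)`, so `m₁' + k (s²/2 + M s)` increases and the Neumann data at `L` give
`m₁' ≤ 1 + k (L²/2 + M L)`; integrating from `m₁(0) = 0` at the point of maximal excess yields
`M ≤ k L³` as soon as `k L² ≤ 1/2`. The same bound makes `g + k (s³/3 + M s²/2)` increasing; it
equals `k (L³/3 + M L²/2)` at `L` because `g(L) = 0`, and it is nonnegative because `g` cannot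
stay below a negative constant near `0` while `m₁(0) = 0`. Hence `|g| ≤ k (L³/3 + M L²/2)` and
`|g(r)| ≤ (1 + k (L²/2 + M L)) r`. Finally the energy constraint gives `k L³ ≤ 3 𝔞₀ + 3 k L² R₀`
and `k L³ ≤ 4 R₀` for `L ≥ 100 R₀`, which turns both bounds into the claimed ones with `C = 12`.
-/

open Set MeasureTheory

/-- A Neumann scattering solution `m₁` with energy `E` on `[0, L]`: it satisfies
`μ m₁'' = (v - E) m₁` on `(0,L)`, is continuous on `[0,L]` and continuously differentiable
on `(0,L]`, with `m₁(0) = 0`, `m₁ > 0` on `(0,L]`, `m₁(L) = L` and `m₁'(L) = 1`.  The Neumann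
scattering function is `f_L(r) = m₁(r)/r`. -/
structure NeumannScattering (v : ℝ → ℝ) (μ L E : ℝ) (m₁ : ℝ → ℝ) : Prop where
  cont : ContinuousOn m₁ (Set.Icc 0 L)
  diff : ∀ r ∈ Set.Ioc (0 : ℝ) L, DifferentiableAt ℝ m₁ r
  derivCont : ContinuousOn (deriv m₁) (Set.Ioc 0 L)
  diff2 : ∀ r ∈ Set.Ioo (0 : ℝ) L, DifferentiableAt ℝ (deriv m₁) r
  ode : ∀ r ∈ Set.Ioo (0 : ℝ) L, μ * deriv (deriv m₁) r = (v r - E) * m₁ r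
  zero : m₁ 0 = 0
  pos : ∀ r ∈ Set.Ioc (0 : ℝ) L, 0 < m₁ r
  bc : m₁ L = L
  bc' : deriv m₁ L = 1

open Filter Topology

theorem monotoneOn_Ioc_of_hasDerivAt_nonneg {f f' : ℝ → ℝ} {a b : ℝ}
    (hf : ContinuousOn f (Ioc a b)) (hf' : ∀ x ∈ Ioo a b, HasDerivAt f (f' x) x)
    (hf'₀ : ∀ x ∈ Ioo a b, 0 ≤ f' x) : MonotoneOn f (Ioc a b) :=
  monotoneOn_of_hasDerivWithinAt_nonneg (convex_Ioc a b) hf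
    (by rw [interior_Ioc]; exact fun x hx => (hf' x hx).hasDerivWithinAt)
    (by rwa [interior_Ioc])

theorem exists_neg_lt_mul_deriv_sub {m : ℝ → ℝ} {s δ : ℝ} (hs : 0 < s) (hδ : 0 < δ)
    (hm : Tendsto m (𝓝[>] 0) (𝓝 0)) (hd : ∀ t ∈ Ioc 0 s, DifferentiableAt ℝ m t) :
    ∃ t ∈ Ioc 0 s, -δ < t * deriv m t - m t := by
  by_contra! h
  -- `(δ - m t) / t` increases, so `m t ≥ δ - O(t)`, contradicting `m t → 0`
  have hmono : MonotoneOn (fun t => (δ - m t) / t) (Ioc 0 s) := by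
    refine monotoneOn_Ioc_of_hasDerivAt_nonneg
      (fun t ht => ((continuousAt_const.sub (hd t ht).continuousAt).div continuousAt_id
        ht.1.ne').continuousWithinAt)
      (fun t ht => ((hd t (Ioo_subset_Ioc_self ht)).hasDerivAt.const_sub δ).fun_div
        (hasDerivAt_id t) ht.1.ne') fun t ht => ?_
    have := h t (Ioo_subset_Ioc_self ht)
    exact div_nonneg (by linarith) (sq_nonneg t)
  have hlower : ∀ t ∈ Ioc 0 s, δ ≤ m t + (δ - m s) / s * t := by
    intro t ht
    have := hmono ht (right_mem_Ioc.2 hs) ht.2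
    rw [div_le_iff₀ ht.1] at this
    simp only at this
    linarith
  have hlim : Tendsto (fun t => m t + (δ - m s) / s * t) (𝓝[>] 0) (𝓝 0) := by
    have hid : Tendsto (fun t : ℝ => (δ - m s) / s * t) (𝓝[>] 0) (𝓝 0) :=
      ((continuous_const_mul _).tendsto' (0 : ℝ) 0 (mul_zero _)).mono_left nhdsWithin_le_nhds
    simpa using hm.add hid
  have : δ ≤ 0 := ge_of_tendsto hlim (eventually_of_mem (Ioc_mem_nhdsGT hs) hlower)
  linarith

theorem MonotoneOn.nonneg_of_mul_deriv_sub_le {m χ : ℝ → ℝ} {L : ℝ}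
    (hm : Tendsto m (𝓝[>] 0) (𝓝 0)) (hd : ∀ t ∈ Ioc 0 L, DifferentiableAt ℝ m t)
    (hχ : MonotoneOn χ (Ioc 0 L)) (hle : ∀ t ∈ Ioc 0 L, t * deriv m t - m t ≤ χ t) :
    ∀ r ∈ Ioc 0 L, 0 ≤ χ r := by
  intro r hr
  refine le_of_forall_pos_lt_add fun δ hδ => ?_
  obtain ⟨t, ht, hlt⟩ := exists_neg_lt_mul_deriv_sub hr.1 hδ hm
    fun t ht => hd t ⟨ht.1, ht.2.trans hr.2⟩
  have htL : t ∈ Ioc 0 L := ⟨ht.1, ht.2.trans hr.2⟩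
  linarith [hle t htL, hχ htL hr ht.2]

namespace NeumannScattering

variable {v : ℝ → ℝ} {μ L E M : ℝ} {m₁ : ℝ → ℝ}

theorem nonneg (ns : NeumannScattering v μ L E m₁) : ∀ s ∈ Icc 0 L, 0 ≤ m₁ s := by
  intro s hs
  rcases hs.1.eq_or_lt with rfl | hs0
  · exact ns.zero.ge
  · exact (ns.pos s ⟨hs0, hs.2⟩).le

theorem tendsto_nhdsGT_zero (ns : NeumannScattering v μ L E m₁) (hL : 0 < L) :
    Tendsto m₁ (𝓝[>] 0) (𝓝 0) := by
  have h := (ns.cont 0 (left_mem_Icc.2 hL.le)).tendsto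
  rw [ns.zero] at h
  rw [← nhdsWithin_Ioc_eq_nhdsGT hL]
  exact h.mono_left (nhdsWithin_mono 0 Ioc_subset_Icc_self)

theorem hasDerivAt_mul_deriv_sub (ns : NeumannScattering v μ L E m₁) :
    ∀ x ∈ Ioo 0 L,
      HasDerivAt (fun s => s * deriv m₁ s - m₁ s) (x * deriv (deriv m₁) x) x := by
  intro x hx
  exact (((hasDerivAt_id' x).mul (ns.diff2 x hx).hasDerivAt).sub
    (ns.diff x (Ioo_subset_Ioc_self hx)).hasDerivAt).congr_deriv (by ring)

theorem neg_mul_add_le_deriv_deriv (ns : NeumannScattering v μ L E m₁) (hμ : 0 < μ)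
    (hv : ∀ r, 0 ≤ v r) (hE : 0 ≤ E) (hM : ∀ s ∈ Ioo 0 L, m₁ s ≤ s + M) :
    ∀ x ∈ Ioo 0 L, -(E / μ * (x + M)) ≤ deriv (deriv m₁) x := by
  intro x hx
  have hm := ns.nonneg x (Ioo_subset_Icc_self hx)
  have hode : deriv (deriv m₁) x = v x / μ * m₁ x - E / μ * m₁ x := by
    field_simp
    linarith [ns.ode x hx]
  rw [hode]
  have hk : 0 ≤ E / μ := div_nonneg hE hμ.le
  nlinarith [mul_nonneg (div_nonneg (hv x) hμ.le) hm, mul_le_mul_of_nonneg_left (hM x hx) hk]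

theorem monotoneOn_deriv_add (ns : NeumannScattering v μ L E m₁) (hμ : 0 < μ)
    (hv : ∀ r, 0 ≤ v r) (hE : 0 ≤ E) (hM : ∀ s ∈ Ioo 0 L, m₁ s ≤ s + M) :
    MonotoneOn (fun s => deriv m₁ s + E / μ * (s ^ 2 / 2 + M * s)) (Ioc 0 L) := by
  refine monotoneOn_Ioc_of_hasDerivAt_nonneg (ns.derivCont.add (by fun_prop))
    (fun x hx => (ns.diff2 x hx).hasDerivAt.add
      ((((hasDerivAt_pow 2 x).div_const 2).add ((hasDerivAt_id' x).const_mul M)).const_mul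
        (E / μ))) fun x hx => ?_
  have h := ns.neg_mul_add_le_deriv_deriv hμ hv hE hM x hx
  norm_num
  linarith

theorem deriv_le_of_le_add (ns : NeumannScattering v μ L E m₁) (hμ : 0 < μ) (hv : ∀ r, 0 ≤ v r)
    (hE : 0 ≤ E) (hM₀ : 0 ≤ M) (hM : ∀ s ∈ Ioo 0 L, m₁ s ≤ s + M) :
    ∀ s ∈ Ioc 0 L, deriv m₁ s ≤ 1 + E / μ * (L ^ 2 / 2 + M * L) := by
  intro s hs
  have h := ns.monotoneOn_deriv_add hμ hv hE hM hs (right_mem_Ioc.2 (hs.1.trans_le hs.2)) hs.2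
  simp only [ns.bc'] at h
  have : 0 ≤ E / μ * (s ^ 2 / 2 + M * s) := by
    have := hs.1.le
    positivity
  linarith

theorem le_mul_of_le_add (ns : NeumannScattering v μ L E m₁) (hμ : 0 < μ) (hv : ∀ r, 0 ≤ v r)
    (hE : 0 ≤ E) (hM₀ : 0 ≤ M) (hM : ∀ s ∈ Ioo 0 L, m₁ s ≤ s + M) :
    ∀ s ∈ Icc 0 L, m₁ s ≤ (1 + E / μ * (L ^ 2 / 2 + M * L)) * s := by
  intro s hs
  have h := (convex_Icc 0 L).image_sub_le_mul_sub_of_deriv_le ns.cont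
    (by
      rw [interior_Icc]
      exact fun x hx => (ns.diff x (Ioo_subset_Ioc_self hx)).differentiableWithinAt)
    (by
      rw [interior_Icc]
      exact fun x hx => ns.deriv_le_of_le_add hμ hv hE hM₀ hM x (Ioo_subset_Ioc_self hx))
    0 (left_mem_Icc.2 (hs.1.trans hs.2)) s hs hs.1
  rw [ns.zero] at h
  linarith

theorem le_add_mul_cube (ns : NeumannScattering v μ L E m₁) (hμ : 0 < μ) (hv : ∀ r, 0 ≤ v r)
    (hE : 0 ≤ E) (hL : 0 < L) (hEL : E / μ * L ^ 2 ≤ 1 / 2) :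
    ∀ s ∈ Icc 0 L, m₁ s ≤ s + E / μ * L ^ 3 := by
  obtain ⟨t, ht, hmax⟩ := isCompact_Icc.exists_isMaxOn (nonempty_Icc.2 hL.le)
    (ns.cont.sub continuousOn_id)
  set M := m₁ t - t
  have hM : ∀ s ∈ Icc 0 L, m₁ s ≤ s + M := fun s hs => by
    have h : m₁ s - s ≤ M := hmax hs
    linarith
  have hM₀ : 0 ≤ M := by linarith [hM 0 (left_mem_Icc.2 hL.le), ns.zero]
  have hk : 0 ≤ E / μ := div_nonneg hE hμ.le
  have hMle : M ≤ E / μ * (L ^ 2 / 2 + M * L) * L := by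
    have h := ns.le_mul_of_le_add hμ hv hE hM₀ (fun s hs => hM s (Ioo_subset_Icc_self hs)) t ht
    have : 0 ≤ E / μ * (L ^ 2 / 2 + M * L) := by positivity
    nlinarith [ht.2]
  have hMk : M ≤ E / μ * L ^ 3 := by nlinarith
  exact fun s hs => (hM s hs).trans (by linarith)

theorem monotoneOn_mul_deriv_sub_add (ns : NeumannScattering v μ L E m₁) (hμ : 0 < μ)
    (hv : ∀ r, 0 ≤ v r) (hE : 0 ≤ E) (hM : ∀ s ∈ Ioo 0 L, m₁ s ≤ s + M) :
    MonotoneOn (fun s => s * deriv m₁ s - m₁ s + E / μ * (s ^ 3 / 3 + M * s ^ 2 / 2))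
      (Ioc 0 L) := by
  refine monotoneOn_Ioc_of_hasDerivAt_nonneg
    (((continuousOn_id.mul ns.derivCont).sub (ns.cont.mono Ioc_subset_Icc_self)).add
      (by fun_prop))
    (fun x hx => (ns.hasDerivAt_mul_deriv_sub x hx).add
      ((((hasDerivAt_pow 3 x).div_const 3).add
        (((hasDerivAt_pow 2 x).const_mul M).div_const 2)).const_mul (E / μ))) fun x hx => ?_
  have h := mul_le_mul_of_nonneg_left (ns.neg_mul_add_le_deriv_deriv hμ hv hE hM x hx) hx.1.le
  norm_num
  nlinarith

theorem neg_le_mul_deriv_sub (ns : NeumannScattering v μ L E m₁) (hμ : 0 < μ)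
    (hv : ∀ r, 0 ≤ v r) (hE : 0 ≤ E) (hM₀ : 0 ≤ M) (hM : ∀ s ∈ Ioo 0 L, m₁ s ≤ s + M) :
    ∀ r ∈ Ioc 0 L, -(E / μ * (r ^ 3 / 3 + M * r ^ 2 / 2)) ≤ r * deriv m₁ r - m₁ r := by
  intro r hr
  have hL : 0 < L := hr.1.trans_le hr.2
  have h := (ns.monotoneOn_mul_deriv_sub_add hμ hv hE hM).nonneg_of_mul_deriv_sub_le
    (ns.tendsto_nhdsGT_zero hL) ns.diff
    (fun t ht => le_add_of_nonneg_right (by have := ht.1.le; positivity)) r hr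
  linarith

theorem abs_mul_deriv_sub_le (ns : NeumannScattering v μ L E m₁) (hμ : 0 < μ)
    (hv : ∀ r, 0 ≤ v r) (hE : 0 ≤ E) (hM₀ : 0 ≤ M) (hM : ∀ s ∈ Ioo 0 L, m₁ s ≤ s + M) :
    ∀ r ∈ Ioc 0 L, |r * deriv m₁ r - m₁ r| ≤ E / μ * (L ^ 3 / 3 + M * L ^ 2 / 2) := by
  intro r hr
  have hk : 0 ≤ E / μ := div_nonneg hE hμ.le
  have hpoly : r ^ 3 / 3 + M * r ^ 2 / 2 ≤ L ^ 3 / 3 + M * L ^ 2 / 2 := by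
    have h3 := pow_le_pow_left₀ hr.1.le hr.2 3
    have h2 := pow_le_pow_left₀ hr.1.le hr.2 2
    nlinarith
  have hupper := ns.monotoneOn_mul_deriv_sub_add hμ hv hE hM hr
    (right_mem_Ioc.2 (hr.1.trans_le hr.2)) hr.2
  simp only [ns.bc, ns.bc'] at hupper
  rw [abs_le]
  constructor
  · nlinarith [ns.neg_le_mul_deriv_sub hμ hv hE hM₀ hM r hr]
  · have := hr.1.le
    nlinarith [mul_nonneg hk (by positivity : 0 ≤ r ^ 3 / 3 + M * r ^ 2 / 2)]

theorem abs_mul_deriv_sub_le_mul (ns : NeumannScattering v μ L E m₁) (hμ : 0 < μ)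
    (hv : ∀ r, 0 ≤ v r) (hE : 0 ≤ E) (hM₀ : 0 ≤ M) (hM : ∀ s ∈ Ioo 0 L, m₁ s ≤ s + M) :
    ∀ r ∈ Ioc 0 L, |r * deriv m₁ r - m₁ r| ≤ (1 + E / μ * (L ^ 2 / 2 + M * L)) * r := by
  intro r hr
  have hk : 0 ≤ E / μ := div_nonneg hE hμ.le
  have hpoly : r ^ 3 / 3 + M * r ^ 2 / 2 ≤ (L ^ 2 / 2 + M * L) * r := by
    have h2 := pow_le_pow_left₀ hr.1.le hr.2 2
    nlinarith [hr.1, hr.2, mul_le_mul_of_nonneg_left hr.2 hM₀]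
  have hderiv := mul_le_mul_of_nonneg_left (ns.deriv_le_of_le_add hμ hv hE hM₀ hM r hr) hr.1.le
  rw [abs_le]
  constructor
  · nlinarith [ns.neg_le_mul_deriv_sub hμ hv hE hM₀ hM r hr, mul_le_mul_of_nonneg_left hpoly hk,
      hr.1]
  · nlinarith [ns.nonneg r (Ioc_subset_Icc_self hr)]

theorem deriv_div_self (ns : NeumannScattering v μ L E m₁) :
    ∀ r ∈ Ioc 0 L, deriv (fun s => m₁ s / s) r = (r * deriv m₁ r - m₁ r) / r ^ 2 := by
  intro r hr
  rw [((ns.diff r hr).hasDerivAt.fun_div (hasDerivAt_id' r) hr.1.ne').deriv]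
  ring

end NeumannScattering

theorem scattering_energy_estimates {R₀ L a k : ℝ} (hR₀ : 0 < R₀) (hL : 100 * R₀ ≤ L)
    (ha : a ≤ R₀) (hk : 0 ≤ k) (hka : k * (L - R₀) ^ 3 ≤ 3 * a) :
    k * L ^ 2 ≤ 1 / 2 ∧ k * (L ^ 3 / 3 + k * L ^ 3 * L ^ 2 / 2) ≤ a + 12 * R₀ ^ 2 / L ∧
      1 + k * (L ^ 2 / 2 + k * L ^ 3 * L) ≤ 2 + 12 * R₀ / L := by
  have hL₀ : 0 < L := by linarith
  have hcube : k * L ^ 3 ≤ 4 * R₀ := by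
    have h : (99 / 100 * L) ^ 3 ≤ (L - R₀) ^ 3 := pow_le_pow_left₀ (by positivity) (by linarith) 3
    nlinarith [mul_le_mul_of_nonneg_left h hk]
  have hq : 0 < R₀ / L := by positivity
  have hq₁ : R₀ / L ≤ 1 / 100 := by rw [div_le_iff₀ hL₀]; linarith
  have hsq : k * L ^ 2 ≤ 4 * (R₀ / L) := by rw [mul_div_assoc', le_div_iff₀ hL₀]; nlinarith
  have hshift : k * L ^ 3 ≤ 3 * a + 3 * (k * L ^ 2) * R₀ := by
    have h : L ^ 3 ≤ (L - R₀) ^ 3 + 3 * L ^ 2 * R₀ := by nlinarith [sq_nonneg R₀]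
    nlinarith [mul_le_mul_of_nonneg_left h hk]
  rw [show 12 * R₀ ^ 2 / L = 12 * (R₀ / L) * R₀ by ring, show 12 * R₀ / L = 12 * (R₀ / L) by ring]
  refine ⟨by linarith, ?_, ?_⟩
  · nlinarith [mul_le_mul hcube hsq (by positivity) (by positivity)]
  · nlinarith [mul_le_mul hsq hsq (by positivity) (by positivity)]

theorem neumann_scattering_gradient_bounds_general
    (R₀ : ℝ) (hR₀ : 0 < R₀)
    (v : ℝ → ℝ) (hv_nonneg : ∀ r, 0 ≤ v r) :
    ∃ C > (0 : ℝ), ∃ L₀ ≥ R₀,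
      ∀ μ : ℝ, 0 < μ →
      ∀ m : ℝ → ℝ, ZeroEnergyScattering v R₀ μ m →
      ∀ L E : ℝ, L₀ ≤ L → 0 ≤ E → E ≤ 3 * μ * (R₀ - m R₀) / (L - R₀) ^ 3 →
      ∀ m₁ : ℝ → ℝ, NeumannScattering v μ L E m₁ →
      ∀ r, 0 < r → r ≤ L →
        |deriv (fun s => m₁ s / s) r| ≤ ((R₀ - m R₀) + C * R₀ ^ 2 / L) / r ^ 2 ∧
        |deriv (fun s => m₁ s / s) r| ≤ (2 + C * R₀ / L) / r := by
  refine ⟨12, by norm_num, 100 * R₀, by linarith, ?_⟩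
  intro μ hμ m zs L E hL hE hEa m₁ ns r hr hrL
  have hL₀ : 0 < L := by linarith
  have ha : R₀ - m R₀ ≤ R₀ := by linarith [zs.pos R₀ hR₀]
  have hka : E / μ * (L - R₀) ^ 3 ≤ 3 * (R₀ - m R₀) := by
    rw [le_div_iff₀ (pow_pos (by linarith) 3)] at hEa
    rw [div_mul_eq_mul_div, div_le_iff₀ hμ]
    linarith
  obtain ⟨hsmall, hcube, hlin⟩ :=
    scattering_energy_estimates hR₀ hL ha (div_nonneg hE hμ.le) hka
  have hM : ∀ s ∈ Ioo 0 L, m₁ s ≤ s + E / μ * L ^ 3 := fun s hs =>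
    ns.le_add_mul_cube hμ hv_nonneg hE hL₀ hsmall s (Ioo_subset_Icc_self hs)
  have hM₀ : 0 ≤ E / μ * L ^ 3 := by have := div_nonneg hE hμ.le; positivity
  have hg₁ := ns.abs_mul_deriv_sub_le hμ hv_nonneg hE hM₀ hM r ⟨hr, hrL⟩
  have hg₂ := ns.abs_mul_deriv_sub_le_mul hμ hv_nonneg hE hM₀ hM r ⟨hr, hrL⟩
  rw [ns.deriv_div_self r ⟨hr, hrL⟩, abs_div, abs_of_pos (pow_pos hr 2)]
  constructor
  · exact div_le_div_of_nonneg_right (hg₁.trans hcube) (by positivity)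
  · rw [div_le_div_iff₀ (pow_pos hr 2) hr]
    nlinarith [mul_le_mul_of_nonneg_right (mul_le_mul_of_nonneg_right hlin hr.le) hr.le]

/-- **Pointwise gradient bounds for the Neumann scattering function.**  There exist `C > 0`
and a threshold `L₀ ≥ R₀`, depending only on `v` and `R₀`, such that whenever `L ≥ L₀`,
`0 ≤ E ≤ 3μ𝔞₀^μ/(L-R₀)³` and `f_L = m₁/r` is the Neumann scattering function of a Neumann
scattering solution with energy `E`, one has
`|f_L'(r)| ≤ (𝔞₀^μ + C R₀²/L)/r²` and `|f_L'(r)| ≤ (2 + C R₀/L)/r` for `0 < r ≤ L`. -/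
theorem neumann_scattering_gradient_bounds
    (R₀ : ℝ) (hR₀ : 0 < R₀)
    (v : ℝ → ℝ) (hv_meas : Measurable v) (hv_nonneg : ∀ r, 0 ≤ v r)
    (hv_bdd : BddAbove (Set.range v))
    (hv_supp : ∀ r, R₀ ≤ r → v r = 0) :
    ∃ C > (0 : ℝ), ∃ L₀ ≥ R₀,
      ∀ μ : ℝ, 0 < μ →
      ∀ m : ℝ → ℝ, ZeroEnergyScattering v R₀ μ m →
      ∀ L E : ℝ, L₀ ≤ L → 0 ≤ E → E ≤ 3 * μ * (R₀ - m R₀) / (L - R₀) ^ 3 →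
      ∀ m₁ : ℝ → ℝ, NeumannScattering v μ L E m₁ →
      ∀ r, 0 < r → r ≤ L →
        |deriv (fun s => m₁ s / s) r| ≤ ((R₀ - m R₀) + C * R₀ ^ 2 / L) / r ^ 2 ∧
        |deriv (fun s => m₁ s / s) r| ≤ (2 + C * R₀ / L) / r :=
  neumann_scattering_gradient_bounds_general R₀ hR₀ v hv_nonneg
end
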